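/- arXiv:1404.0110 — 7 statements merged into one kernel-verified Lean document; each statement's English description precedes it below -/
import Mathlib

section
/- Let q be a prime power such that 3 does not divide q-1. Then for all vectors u, v ∈ D_q, the intersection of the restricted extended balls satisfies |Ẽ(u) ∩ Ẽ(v)| ≥ 2(q-1). -/
open Set Pointwise

variable {F : Type*} [Field F]

/-- Hamming distance on `𝔽_q³`. -/
noncomputable def hdist (u v : Fin 3 → F) : ℕ := Set.ncard {i : Fin 3 | u i ≠ v i}

/-- The ball of radius 1 centered at `u`. -/
def ball (u : Fin 3 → F) : Set (Fin 3 → F) := {v | hdist u v ≤ 1}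

/-- The extended ball of `u`: the union of the balls centered at scalar multiples of `u`. -/
def extBall (u : Fin 3 → F) : Set (Fin 3 → F) := ⋃ l : F, ball (l • u)

/-- `D_q`: vectors with pairwise distinct, nonzero coordinates. -/
def Dq : Set (Fin 3 → F) :=
  {u | u 0 ≠ u 1 ∧ u 0 ≠ u 2 ∧ u 1 ≠ u 2 ∧ u 0 ≠ 0 ∧ u 1 ≠ 0 ∧ u 2 ≠ 0}

/-- `B̃(u) = B(u) ∩ D_q`. -/
def ballD (u : Fin 3 → F) : Set (Fin 3 → F) := ball u ∩ Dq

/-- `Ẽ(u) = E(u) ∩ D_q`. -/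
def extBallD (u : Fin 3 → F) : Set (Fin 3 → F) := extBall u ∩ Dq

/-- `H` is a short covering if the extended balls centered at its elements cover the space. -/
def ShortCovering (H : Set (Fin 3 → F)) : Prop := (⋃ h ∈ H, extBall h) = Set.univ

/-!
`Ẽ(u)` is closed under nonzero scaling, so it suffices to find two non-proportional
`c, c' ∈ D_q` each of which agrees with a multiple of `u` off one coordinate and with a multiple
of `v` off one coordinate: their punctured lines are disjoint and have `q - 1` points each.

If `v` is a multiple of `u`, take `c = (x, u₁, u₂)` and `c' = (u₀, x, u₂)` with
`x ∉ {0, u₀, u₁, u₂}`, which exists because `q ≥ 4` and `q ≠ 4`. Otherwise use two of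
`(u₂v₀, u₁v₂, u₂v₂)`, `(u₀v₁, u₁v₁, u₁v₂)`, `(u₀v₀, u₀v₁, u₂v₀)`: their exceptional coordinates
differ, so two proportional ones would make `u` and `v` proportional, and at least two of them lie
in `D_q` unless `u₀v₁ = u₁v₂ = u₂v₀`. If this cyclic condition holds for both `(u, v)` and
`(v, u)`, then `(u₀v₁)³ = (u₁v₀)³`, hence `u₀v₁ = u₁v₀` because cubing is injective on `𝔽_q^×`
when `3 ∤ q - 1`, and this forces `v₁ = v₂`.
-/

open MulAction

section Orbits

variable {K V : Type*} [Field K] [AddCommGroup V] [Module K V]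

lemma ncard_orbit_units {c : V} (hc : c ≠ 0) : (orbit Kˣ c).ncard = Nat.card K - 1 := by
  rw [← Nat.card_units K]
  exact Set.ncard_range_of_injective fun m n h => Units.ext (smul_left_injective K hc h)

lemma two_mul_le_ncard_of_orbits_subset [Finite V] {S : Set V} {c c' : V} (hc : c ≠ 0)
    (hc' : c' ≠ 0) (hS : orbit Kˣ c ⊆ S) (hS' : orbit Kˣ c' ⊆ S) (hcc' : c' ∉ orbit Kˣ c) :
    2 * (Nat.card K - 1) ≤ S.ncard := by
  have hdisj : Disjoint (orbit Kˣ c) (orbit Kˣ c') :=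
    (orbit.eq_or_disjoint c c').resolve_left fun h => hcc' (h ▸ mem_orbit_self c')
  calc 2 * (Nat.card K - 1) = (orbit Kˣ c ∪ orbit Kˣ c').ncard := by
        rw [Set.ncard_union_eq hdisj, ncard_orbit_units hc, ncard_orbit_units hc', two_mul]
    _ ≤ S.ncard := Set.ncard_le_ncard (Set.union_subset hS hS')

end Orbits

variable {u v c c' : Fin 3 → F}

lemma hdist_smul_smul {l : F} (hl : l ≠ 0) (u v : Fin 3 → F) :
    hdist (l • u) (l • v) = hdist u v := by
  simp [hdist, hl]

lemma apply_ne_zero_of_mem_Dq (hu : u ∈ Dq) (k : Fin 3) : u k ≠ 0 := by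
  obtain ⟨-, -, -, h0, h1, h2⟩ := hu
  fin_cases k <;> assumption

lemma ne_zero_of_mem_Dq (hu : u ∈ Dq) : u ≠ 0 :=
  fun h => apply_ne_zero_of_mem_Dq hu 0 (by simp [h])

lemma smul_mem_Dq (hc : c ∈ Dq) {l : F} (hl : l ≠ 0) : l • c ∈ Dq := by
  obtain ⟨h01, h02, h12, h0, h1, h2⟩ := hc
  simp only [Dq, Set.mem_ofPred_eq, Pi.smul_apply, smul_eq_mul, ne_eq, mul_right_inj' hl,
    mul_eq_zero, hl, false_or]
  exact ⟨h01, h02, h12, h0, h1, h2⟩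

lemma orbit_subset_extBallD (hc : c ∈ extBallD u) : orbit Fˣ c ⊆ extBallD u := by
  rintro _ ⟨m, rfl⟩
  obtain ⟨hcu, hc⟩ := hc
  obtain ⟨l, hl⟩ := Set.mem_iUnion.1 hcu
  refine ⟨Set.mem_iUnion.2 ⟨m * l, ?_⟩, smul_mem_Dq hc m.ne_zero⟩
  change hdist ((m * l) • u) ((m : F) • c) ≤ 1
  rwa [mul_smul, hdist_smul_smul m.ne_zero]

lemma extBallD_subset_extBallD_smul {m : F} (hm : m ≠ 0) : extBallD u ⊆ extBallD (m • u) := by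
  rintro c ⟨hcu, hc⟩
  obtain ⟨l, hl⟩ := Set.mem_iUnion.1 hcu
  refine ⟨Set.mem_iUnion.2 ⟨l * m⁻¹, ?_⟩, hc⟩
  rwa [smul_smul, inv_mul_cancel_right₀ hm]

def ProportionalOff (c u : Fin 3 → F) (i : Fin 3) : Prop := ∃ α : F, ∀ k ≠ i, c k = α * u k

lemma ProportionalOff.mem_extBall {i : Fin 3} (h : ProportionalOff c u i) : c ∈ extBall u := by
  obtain ⟨α, hα⟩ := h
  refine Set.mem_iUnion.2 ⟨α, ?_⟩
  have hsub : {k | (α • u) k ≠ c k} ⊆ {i} := fun k hk => by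
    by_contra hki
    exact hk (hα k hki).symm
  calc hdist (α • u) c ≤ ({i} : Set (Fin 3)).ncard := Set.ncard_le_ncard hsub
    _ = 1 := Set.ncard_singleton i

lemma ProportionalOff.smul {i : Fin 3} (h : ProportionalOff c u i) (m : F) :
    ProportionalOff (m • c) u i := by
  obtain ⟨α, hα⟩ := h
  exact ⟨m * α, fun k hk => by simp [hα k hk, mul_assoc]⟩

lemma ProportionalOff.eq_smul (hu : ∀ k, u k ≠ 0) {i j : Fin 3} (hi : ProportionalOff c u i)
    (hj : ProportionalOff c u j) (hij : i ≠ j) : ∃ α : F, c = α • u := by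
  obtain ⟨α, hα⟩ := hi
  obtain ⟨β, hβ⟩ := hj
  obtain ⟨k, hki, hkj⟩ : ∃ k, k ≠ i ∧ k ≠ j := by
    fin_cases i <;> fin_cases j <;> simp at hij ⊢ <;> decide
  have hαβ : α = β := mul_right_cancel₀ (hu k) ((hα k hki).symm.trans (hβ k hkj))
  refine ⟨α, funext fun l => ?_⟩
  rcases eq_or_ne l i with rfl | hli
  · rw [hβ l hij, hαβ]; rfl
  · exact hα l hli

lemma eq_smul_of_mem_orbit (hu : ∀ k, u k ≠ 0) {i i' : Fin 3} (hc : ProportionalOff c u i)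
    (hc' : ProportionalOff c' u i') (hii' : i ≠ i') (h : c' ∈ orbit Fˣ c) :
    ∃ α : F, c = α • u := by
  obtain ⟨m, rfl⟩ := mem_orbit_symm.1 h
  exact hc.eq_smul hu (hc'.smul m) hii'

lemma two_mul_le_ncard_extBallD [Finite F] (hF : Nat.card F ≠ 4) (hu : u ∈ Dq) :
    2 * (Nat.card F - 1) ≤ (extBallD u).ncard := by
  classical
  have := Fintype.ofFinite F
  have hu0 := apply_ne_zero_of_mem_Dq hu
  obtain ⟨h01, h02, h12, h0, h1, h2⟩ := hu
  obtain ⟨x, -, hx⟩ : ∃ x ∈ Finset.univ, x ∉ ({0, u 0, u 1, u 2} : Finset F) := by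
    have h4 : ({0, u 0, u 1, u 2} : Finset F).card = 4 := by
      rw [Finset.card_insert_of_notMem, Finset.card_insert_of_notMem,
        Finset.card_pair h12] <;> simp [*, Ne.symm h0, Ne.symm h1, Ne.symm h2]
    refine Finset.exists_mem_notMem_of_card_lt_card ?_
    have := Finset.card_le_univ ({0, u 0, u 1, u 2} : Finset F)
    rw [Nat.card_eq_fintype_card] at hF
    rw [Finset.card_univ]
    omega
  simp only [Finset.mem_insert, Finset.mem_singleton, not_or] at hx
  obtain ⟨hx0, hx0', hx1, hx2⟩ := hx
  set c : Fin 3 → F := ![x, u 1, u 2]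
  set c' : Fin 3 → F := ![u 0, x, u 2]
  have hcu : ProportionalOff c u 0 := ⟨1, fun k hk => by fin_cases k <;> simp_all [c]⟩
  have hc'u : ProportionalOff c' u 1 := ⟨1, fun k hk => by fin_cases k <;> simp_all [c']⟩
  have hc : c ∈ Dq := ⟨hx1, hx2, h12, hx0, h1, h2⟩
  have hc' : c' ∈ Dq := ⟨Ne.symm hx0', h02, hx2, h0, hx0, h2⟩
  refine two_mul_le_ncard_of_orbits_subset (ne_zero_of_mem_Dq hc) (ne_zero_of_mem_Dq hc')
    (orbit_subset_extBallD ⟨hcu.mem_extBall, hc⟩) (orbit_subset_extBallD ⟨hc'u.mem_extBall, hc'⟩)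
    fun h => ?_
  obtain ⟨α, hα⟩ := eq_smul_of_mem_orbit hu0 hcu hc'u (by decide) h
  have hα1 : α = 1 := by simpa [h1, c] using congrFun hα 1
  exact hx0' (by simpa [hα1, c] using congrFun hα 0)

lemma two_mul_le_ncard_of_witnesses [Finite F] (hu : u ∈ Dq) (hv : v ∈ Dq)
    (hnp : ∀ m : F, v ≠ m • u) (hc : c ∈ Dq) (hc' : c' ∈ Dq) {i i' j j' : Fin 3}
    (hcu : ProportionalOff c u i) (hcv : ProportionalOff c v j)
    (hc'u : ProportionalOff c' u i') (hc'v : ProportionalOff c' v j') (hi : i ≠ i') (hj : j ≠ j') :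
    2 * (Nat.card F - 1) ≤ (extBallD u ∩ extBallD v).ncard := by
  refine two_mul_le_ncard_of_orbits_subset (ne_zero_of_mem_Dq hc) (ne_zero_of_mem_Dq hc')
    (Set.subset_inter (orbit_subset_extBallD ⟨hcu.mem_extBall, hc⟩)
      (orbit_subset_extBallD ⟨hcv.mem_extBall, hc⟩))
    (Set.subset_inter (orbit_subset_extBallD ⟨hc'u.mem_extBall, hc'⟩)
      (orbit_subset_extBallD ⟨hc'v.mem_extBall, hc'⟩)) fun h => ?_
  obtain ⟨α, hα⟩ := eq_smul_of_mem_orbit (apply_ne_zero_of_mem_Dq hu) hcu hc'u hi h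
  obtain ⟨β, hβ⟩ := eq_smul_of_mem_orbit (apply_ne_zero_of_mem_Dq hv) hcv hc'v hj h
  have hβ0 : β ≠ 0 := by
    rintro rfl
    exact ne_zero_of_mem_Dq hc (by rw [hβ, zero_smul])
  apply hnp (β⁻¹ * α)
  rw [mul_smul, ← hα, hβ, inv_smul_smul₀ hβ0]

lemma two_mul_le_ncard_of_not_cyclic [Finite F] (hu : u ∈ Dq) (hv : v ∈ Dq)
    (hnp : ∀ m : F, v ≠ m • u) (hcyc : ¬(u 0 * v 1 = u 1 * v 2 ∧ u 1 * v 2 = u 2 * v 0)) :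
    2 * (Nat.card F - 1) ≤ (extBallD u ∩ extBallD v).ncard := by
  have key {c c' : Fin 3 → F} := two_mul_le_ncard_of_witnesses (c := c) (c' := c') hu hv hnp
  obtain ⟨hu01, hu02, hu12, hu0, hu1, hu2⟩ := hu
  obtain ⟨hv01, hv02, hv12, hv0, hv1, hv2⟩ := hv
  set cA : Fin 3 → F := ![u 2 * v 0, u 1 * v 2, u 2 * v 2]
  set cB : Fin 3 → F := ![u 0 * v 1, u 1 * v 1, u 1 * v 2]
  set cC : Fin 3 → F := ![u 0 * v 0, u 0 * v 1, u 2 * v 0]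
  have hAu : ProportionalOff cA u 0 := ⟨v 2, fun k hk => by fin_cases k <;> simp_all [cA, mul_comm]⟩
  have hAv : ProportionalOff cA v 1 := ⟨u 2, fun k hk => by fin_cases k <;> simp_all [cA]⟩
  have hBu : ProportionalOff cB u 2 := ⟨v 1, fun k hk => by fin_cases k <;> simp_all [cB, mul_comm]⟩
  have hBv : ProportionalOff cB v 0 := ⟨u 1, fun k hk => by fin_cases k <;> simp_all [cB]⟩
  have hCu : ProportionalOff cC u 1 := ⟨v 0, fun k hk => by fin_cases k <;> simp_all [cC, mul_comm]⟩
  have hCv : ProportionalOff cC v 2 := ⟨u 0, fun k hk => by fin_cases k <;> simp_all [cC]⟩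
  have hA (h : u 2 * v 0 ≠ u 1 * v 2) : cA ∈ Dq :=
    ⟨h, fun h => hv02 (mul_left_cancel₀ hu2 h), fun h => hu12 (mul_right_cancel₀ hv2 h),
      mul_ne_zero hu2 hv0, mul_ne_zero hu1 hv2, mul_ne_zero hu2 hv2⟩
  have hB (h : u 0 * v 1 ≠ u 1 * v 2) : cB ∈ Dq :=
    ⟨fun h => hu01 (mul_right_cancel₀ hv1 h), h, fun h => hv12 (mul_left_cancel₀ hu1 h),
      mul_ne_zero hu0 hv1, mul_ne_zero hu1 hv1, mul_ne_zero hu1 hv2⟩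
  have hC (h : u 0 * v 1 ≠ u 2 * v 0) : cC ∈ Dq :=
    ⟨fun h => hv01 (mul_left_cancel₀ hu0 h), fun h => hu02 (mul_right_cancel₀ hv0 h), h,
      mul_ne_zero hu0 hv0, mul_ne_zero hu0 hv1, mul_ne_zero hu2 hv0⟩
  by_cases hab : u 0 * v 1 = u 1 * v 2
  · have hcb : u 2 * v 0 ≠ u 1 * v 2 := fun h => hcyc ⟨hab, h.symm⟩
    exact key (hA hcb) (hC fun h => hcb (h.symm.trans hab)) hAu hAv hCu hCv (by decide) (by decide)
  by_cases hac : u 0 * v 1 = u 2 * v 0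
  · exact key (hA fun h => hab (hac.trans h)) (hB hab) hAu hAv hBu hBv (by decide) (by decide)
  · exact key (hB hab) (hC hac) hBu hBv hCu hCv (by decide) (by decide)

lemma eq_of_pow_three_eq [Finite F] (h3 : ¬ 3 ∣ Nat.card F - 1) {a b : F} (ha : a ≠ 0)
    (hb : b ≠ 0) (h : a ^ 3 = b ^ 3) : a = b := by
  have hco : (Nat.card Fˣ).Coprime 3 := by
    rw [Nat.card_units, Nat.coprime_comm]
    exact (Nat.Prime.coprime_iff_not_dvd Nat.prime_three).2 h3
  have := hco.pow_left_bijective.injective (a₁ := Units.mk0 a ha) (a₂ := Units.mk0 b hb)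
    (Units.ext (by simpa using h))
  simpa using congrArg Units.val this

lemma not_cyclic_and_cyclic_swap [Finite F] (h3 : ¬ 3 ∣ Nat.card F - 1) (hu : u ∈ Dq)
    (hv : v ∈ Dq) (hcyc : u 0 * v 1 = u 1 * v 2 ∧ u 1 * v 2 = u 2 * v 0) :
    ¬(v 0 * u 1 = v 1 * u 2 ∧ v 1 * u 2 = v 2 * u 0) := by
  rintro ⟨hab', hbc'⟩
  obtain ⟨hab, hbc⟩ := hcyc
  have hcube : (u 0 * v 1) ^ 3 = (v 0 * u 1) ^ 3 := by
    calc (u 0 * v 1) ^ 3 = (u 0 * v 1) * (u 1 * v 2) * (u 2 * v 0) := by rw [← hbc, ← hab]; ring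
      _ = (v 0 * u 1) * (v 1 * u 2) * (v 2 * u 0) := by ring
      _ = (v 0 * u 1) ^ 3 := by rw [← hbc', ← hab']; ring
  have h := eq_of_pow_three_eq h3 (mul_ne_zero (apply_ne_zero_of_mem_Dq hu 0)
    (apply_ne_zero_of_mem_Dq hv 1)) (mul_ne_zero (apply_ne_zero_of_mem_Dq hv 0)
    (apply_ne_zero_of_mem_Dq hu 1)) hcube
  exact hv.2.2.1 (mul_left_cancel₀ (apply_ne_zero_of_mem_Dq hu 0)
    (by linear_combination h + hab' + hbc'))

lemma forall_ne_smul_symm (hu : u ∈ Dq) (h : ∀ m : F, v ≠ m • u) : ∀ m : F, u ≠ m • v := by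
  rintro m rfl
  have hm : m ≠ 0 := by
    rintro rfl
    exact ne_zero_of_mem_Dq hu (zero_smul F v)
  exact h m⁻¹ (inv_smul_smul₀ hm v).symm

theorem stmt_0_general (q : ℕ) (F : Type*) [Field F] [Fintype F]
    (hcard : Fintype.card F = q) (h3 : ¬ (3 ∣ q - 1)) :
    ∀ u ∈ (Dq : Set (Fin 3 → F)), ∀ v ∈ (Dq : Set (Fin 3 → F)),
      2 * (q - 1) ≤ (extBallD u ∩ extBallD v).ncard := by
  intro u hu v hv
  subst hcard
  rw [← Nat.card_eq_fintype_card] at h3 ⊢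
  by_cases hprop : ∃ m : F, v = m • u
  · obtain ⟨m, rfl⟩ := hprop
    have hm : m ≠ 0 := left_ne_zero_of_smul (ne_zero_of_mem_Dq hv)
    rw [Set.inter_eq_left.2 (extBallD_subset_extBallD_smul hm)]
    exact two_mul_le_ncard_extBallD (fun h => h3 (by rw [h])) hu
  push Not at hprop
  by_cases hcyc : u 0 * v 1 = u 1 * v 2 ∧ u 1 * v 2 = u 2 * v 0
  · rw [Set.inter_comm]
    exact two_mul_le_ncard_of_not_cyclic hv hu (forall_ne_smul_symm hu hprop)
      (not_cyclic_and_cyclic_swap h3 hu hv hcyc)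
  · exact two_mul_le_ncard_of_not_cyclic hu hv hprop hcyc

theorem stmt_0 (q : ℕ) (hq : IsPrimePow q) (F : Type*) [Field F] [Fintype F]
    (hcard : Fintype.card F = q) (h3 : ¬ (3 ∣ q - 1)) :
    ∀ u ∈ (Dq : Set (Fin 3 → F)), ∀ v ∈ (Dq : Set (Fin 3 → F)),
      2 * (q - 1) ≤ (extBallD u ∩ extBallD v).ncard :=
  stmt_0_general q F hcard h3
end

section
/- Let q be a prime power such that 3 divides q-1. Then there exist vectors u, v ∈ D_q with Ẽ(u) ∩ Ẽ(v) = ∅; in particular the family {Ẽ(u) : u ∈ D_q} is t-intersecting only for t = 0. -/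
open Set Pointwise

variable {F : Type*} [Field F]

/-!
Let `ω` be a primitive cube root of unity (it exists since `3 ∣ q - 1`) and take
`u = (1, ω, ω²)`, `v = (1, ω², ω)`, both in `D_q`. A vector `w` lies in `E(u)` when it agrees
with some `λu` in two coordinates, and since the coordinates of `u` form a geometric progression
of ratio `ω` along the cyclic order of `Fin 3`, this forces `w (k + 1) = ω * w k` for some `k`;
likewise `w ∈ E(v)` forces `w (j + 1) = ω² * w j` for some `j`. Comparing the two relations for
the three possible offsets `j - k` contradicts either `w k ≠ 0` or the distinctness of the
coordinates of `w`. Hence `Ẽ(u) ∩ Ẽ(v) = ∅`, while `Ẽ(u) ≠ Ẽ(v)` as `u ∈ Ẽ(u)`.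
-/

lemma mem_Dq_iff {w : Fin 3 → F} : w ∈ Dq ↔ Function.Injective w ∧ ∀ i, w i ≠ 0 := by
  constructor
  · rintro ⟨h01, h02, h12, h0, h1, h2⟩
    refine ⟨fun i j hij => ?_, fun i => ?_⟩
    · by_contra hne
      fin_cases i <;> fin_cases j <;> simp_all [eq_comm]
    · fin_cases i <;> assumption
  · rintro ⟨hinj, hne⟩
    exact ⟨hinj.ne (by decide), hinj.ne (by decide), hinj.ne (by decide), hne 0, hne 1, hne 2⟩

lemma self_mem_extBallD {u : Fin 3 → F} (hu : u ∈ Dq) : u ∈ extBallD u :=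
  ⟨mem_iUnion.2 ⟨1, by simp [ball, hdist]⟩, hu⟩

lemma exists_ne_eq_eq_of_hdist_le_one {α : Type*} {u v : Fin 3 → α} (h : hdist u v ≤ 1) :
    ∃ i j, i ≠ j ∧ u i = v i ∧ u j = v j := by
  have hsum := ncard_add_ncard_compl {i : Fin 3 | u i ≠ v i}
  rw [Nat.card_eq_fintype_card, Fintype.card_fin] at hsum
  have : 1 < {i : Fin 3 | u i ≠ v i}ᶜ.ncard := by unfold hdist at h; omega
  obtain ⟨i, j, hi, hj, hij⟩ := (one_lt_ncard_iff).1 this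
  exact ⟨i, j, hij, not_not.1 hi, not_not.1 hj⟩

def geomVec (ζ : F) : Fin 3 → F := fun k => ζ ^ (k : ℕ)

lemma geomVec_succ {ζ : F} (hζ : ζ ^ 3 = 1) (k : Fin 3) :
    geomVec ζ (k + 1) = ζ * geomVec ζ k := by
  fin_cases k
  · simp [geomVec]
  · simp [geomVec, pow_two]
  · simp [geomVec, ← pow_succ', hζ]

lemma geomVec_mem_Dq {ζ : F} (hζ : IsPrimitiveRoot ζ 3) : geomVec ζ ∈ Dq :=
  mem_Dq_iff.2 ⟨fun i j h => Fin.ext (hζ.pow_inj i.isLt j.isLt h),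
    fun _ => pow_ne_zero _ (hζ.ne_zero three_ne_zero)⟩

lemma exists_succ_eq_mul_of_mem_extBall {ζ : F} (hζ : ζ ^ 3 = 1) {w : Fin 3 → F}
    (hw : w ∈ extBall (geomVec ζ)) : ∃ k, w (k + 1) = ζ * w k := by
  obtain ⟨l, hl⟩ := mem_iUnion.1 hw
  obtain ⟨i, j, hij, hi, hj⟩ := exists_ne_eq_eq_of_hdist_le_one hl
  have hw_succ {k : Fin 3} (hk : l * geomVec ζ k = w k)
      (hk1 : l * geomVec ζ (k + 1) = w (k + 1)) : w (k + 1) = ζ * w k := by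
    rw [← hk, ← hk1, geomVec_succ hζ]; ring
  have hadj : ∀ i j : Fin 3, i ≠ j → j = i + 1 ∨ i = j + 1 := by decide
  rcases hadj i j hij with rfl | rfl
  · exact ⟨i, hw_succ hi hj⟩
  · exact ⟨j, hw_succ hj hi⟩

lemma succ_ne_sq_mul_of_succ_eq_mul {ω : F} (hω : IsPrimitiveRoot ω 3) {w : Fin 3 → F}
    (hw : w ∈ Dq) {i j : Fin 3} (hi : w (i + 1) = ω * w i) : w (j + 1) ≠ ω ^ 2 * w j := by
  obtain ⟨hinj, hne⟩ := mem_Dq_iff.1 hw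
  have hω3 : ω ^ 3 = 1 := hω.pow_eq_one
  have hoffset : ∀ i j : Fin 3, j = i ∨ j = i + 1 ∨ j = i + 2 := by decide
  have hadd_three : ∀ k : Fin 3, k + 2 + 1 = k := by decide
  have hne_two : ∀ k : Fin 3, k + 2 ≠ k := by decide
  have hne_one_two : ∀ k : Fin 3, k + 1 ≠ k + 2 := by decide
  intro hj
  rcases hoffset i j with h | h | h <;> subst j
  · have : ω * w i = ω ^ 2 * w i := by rw [← hi, hj]
    have h12 := hω.pow_inj (i := 1) (j := 2) (by norm_num) (by norm_num)
      (by simpa using mul_right_cancel₀ (hne i) this)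
    exact absurd h12 (by norm_num)
  · have h2 : w (i + 2) = w i := by
      rw [show i + 2 = i + 1 + 1 by abel, hj, hi]
      linear_combination w i * hω3
    exact hne_two i (hinj h2)
  · have h12 : w (i + 1) = w (i + 2) := by
      rw [hadd_three] at hj
      rw [hi, hj]
      linear_combination w (i + 2) * hω3
    exact hne_one_two i (hinj h12)

lemma extBallD_geomVec_inter_eq_empty {ω : F} (hω : IsPrimitiveRoot ω 3) :
    extBallD (geomVec ω) ∩ extBallD (geomVec (ω ^ 2)) = ∅ := by
  refine eq_empty_of_forall_notMem fun w ⟨⟨hwu, hw⟩, hwv, _⟩ => ?_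
  obtain ⟨i, hi⟩ := exists_succ_eq_mul_of_mem_extBall hω.pow_eq_one hwu
  obtain ⟨j, hj⟩ :=
    exists_succ_eq_mul_of_mem_extBall (hω.pow_of_coprime 2 (by norm_num)).pow_eq_one hwv
  exact succ_ne_sq_mul_of_succ_eq_mul hω hw hi hj

lemma extBallD_ne_of_inter_eq_empty {u v : Fin 3 → F} (hu : u ∈ Dq)
    (h : extBallD u ∩ extBallD v = ∅) : extBallD u ≠ extBallD v := fun heq =>
  (eq_empty_iff_forall_notMem.1 h) u ⟨self_mem_extBallD hu, heq ▸ self_mem_extBallD hu⟩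

lemma exists_isPrimitiveRoot_of_dvd_card_sub_one [Fintype F] {p : ℕ} [Fact p.Prime]
    (hp : p ∣ Fintype.card F - 1) : ∃ ω : F, IsPrimitiveRoot ω p := by
  classical
  rw [← Fintype.card_units] at hp
  obtain ⟨ζ, hζ⟩ := exists_prime_orderOf_dvd_card p hp
  exact ⟨ζ, IsPrimitiveRoot.coe_units_iff.2 (hζ ▸ IsPrimitiveRoot.orderOf ζ)⟩

theorem stmt_2_general (q : ℕ) (F : Type*) [Field F] [Fintype F]
    (hcard : Fintype.card F = q) (h3 : 3 ∣ q - 1) :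
    (∃ u ∈ (Dq : Set (Fin 3 → F)), ∃ v ∈ (Dq : Set (Fin 3 → F)),
        extBallD u ∩ extBallD v = ∅) ∧
    ∀ t : ℕ, (∀ u ∈ (Dq : Set (Fin 3 → F)), ∀ v ∈ (Dq : Set (Fin 3 → F)),
        extBallD u ≠ extBallD v → t ≤ (extBallD u ∩ extBallD v).ncard) → t = 0 := by
  obtain ⟨ω, hω⟩ := exists_isPrimitiveRoot_of_dvd_card_sub_one (F := F) (hcard ▸ h3)
  have hu := geomVec_mem_Dq hω
  have hv := geomVec_mem_Dq (hω.pow_of_coprime 2 (by norm_num))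
  have hdisj := extBallD_geomVec_inter_eq_empty hω
  refine ⟨⟨_, hu, _, hv, hdisj⟩, fun t ht => ?_⟩
  simpa [hdisj] using ht _ hu _ hv (extBallD_ne_of_inter_eq_empty hu hdisj)

theorem stmt_2 (q : ℕ) (hq : IsPrimePow q) (F : Type*) [Field F] [Fintype F]
    (hcard : Fintype.card F = q) (h3 : 3 ∣ q - 1) :
    (∃ u ∈ (Dq : Set (Fin 3 → F)), ∃ v ∈ (Dq : Set (Fin 3 → F)),
        extBallD u ∩ extBallD v = ∅) ∧
    ∀ t : ℕ, (∀ u ∈ (Dq : Set (Fin 3 → F)), ∀ v ∈ (Dq : Set (Fin 3 → F)),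
        extBallD u ≠ extBallD v → t ≤ (extBallD u ∩ extBallD v).ncard) → t = 0 :=
  stmt_2_general q F hcard h3
end

section
/- Let q be a prime power and u ∈ 𝔽_q³. If either (i) u has exactly one nonzero coordinate, or (ii) u has exactly two nonzero coordinates and these two nonzero coordinates are equal, or (iii) all three coordinates of u are equal and nonzero, then Ẽ(u) = ∅. -/
/-!
Every vector `w` of the ball `B(λu)` agrees with `λu` in at least two coordinates. Under each
of the three hypotheses all nonzero coordinates of `u`, hence of `λu`, are equal, so those two
coordinates of `w` are either equal or one of them is zero, and `w ∉ D_q`.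
-/

open Set Pointwise

variable {F : Type*} [Field F]

lemma exists_pair_eq_of_hdist_le_one {α : Type*} {u v : Fin 3 → α} (huv : hdist u v ≤ 1) :
    ∃ i j, i ≠ j ∧ u i = v i ∧ u j = v j := by
  have hsum := ncard_add_ncard_compl {i : Fin 3 | u i ≠ v i}
  rw [Nat.card_eq_fintype_card, Fintype.card_fin] at hsum
  have hagree : 1 < ({i : Fin 3 | u i ≠ v i}ᶜ).ncard := by
    unfold hdist at huv
    omega
  obtain ⟨i, j, hi, hj, hij⟩ := (one_lt_ncard_iff).mp hagree
  simp only [mem_compl_iff, mem_ofPred_eq, not_not] at hi hj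
  exact ⟨i, j, hij, hi, hj⟩

lemma Dq_apply_ne {v : Fin 3 → F} (hv : v ∈ Dq) {i j : Fin 3} (hij : i ≠ j) : v i ≠ v j := by
  obtain ⟨h01, h02, h12, -⟩ := hv
  fin_cases i <;> fin_cases j <;> simp_all [Ne.symm]

lemma Dq_apply_ne_zero {v : Fin 3 → F} (hv : v ∈ Dq) (i : Fin 3) : v i ≠ 0 := by
  obtain ⟨-, -, -, h0, h1, h2⟩ := hv
  fin_cases i <;> assumption

lemma smul_apply_eq_of_ne_zero {ι : Type*} {u : ι → F}
    (hu : ∀ i j, u i ≠ 0 → u j ≠ 0 → u i = u j) (l : F) :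
    ∀ i j, (l • u) i ≠ 0 → (l • u) j ≠ 0 → (l • u) i = (l • u) j := by
  intro i j hi hj
  simp only [Pi.smul_apply, smul_eq_mul, ne_eq, mul_eq_zero, not_or] at hi hj ⊢
  rw [hu i j hi.2 hj.2]

lemma extBallD_eq_empty_of_apply_eq {u : Fin 3 → F}
    (hu : ∀ i j, u i ≠ 0 → u j ≠ 0 → u i = u j) : extBallD u = ∅ := by
  refine eq_empty_of_forall_notMem fun w ⟨hw, hwD⟩ => ?_
  obtain ⟨l, hwl⟩ := mem_iUnion.mp hw
  obtain ⟨i, j, hij, hi, hj⟩ := exists_pair_eq_of_hdist_le_one hwl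
  have hi0 : (l • u) i ≠ 0 := hi ▸ Dq_apply_ne_zero hwD i
  have hj0 : (l • u) j ≠ 0 := hj ▸ Dq_apply_ne_zero hwD j
  exact Dq_apply_ne hwD hij (hi ▸ hj ▸ smul_apply_eq_of_ne_zero hu l i j hi0 hj0)

theorem stmt_4_general (F : Type*) [Field F] (u : Fin 3 → F)
    (h : ({i : Fin 3 | u i ≠ 0}).ncard = 1 ∨
         (({i : Fin 3 | u i ≠ 0}).ncard = 2 ∧
           ∀ i j : Fin 3, u i ≠ 0 → u j ≠ 0 → u i = u j) ∨
         (u 0 = u 1 ∧ u 1 = u 2 ∧ u 0 ≠ 0)) :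
    extBallD u = ∅ := by
  apply extBallD_eq_empty_of_apply_eq
  rcases h with hone | ⟨-, heq⟩ | ⟨h01, h12, -⟩
  · intro i j hi hj
    rw [(ncard_le_one_iff).mp hone.le hi hj]
  · exact heq
  · intro i j _ _
    fin_cases i <;> fin_cases j <;> simp [h01, h12]

theorem stmt_4 (q : ℕ) (hq : IsPrimePow q) (F : Type*) [Field F] [Fintype F]
    (hcard : Fintype.card F = q) (u : Fin 3 → F)
    (h : ({i : Fin 3 | u i ≠ 0}).ncard = 1 ∨
         (({i : Fin 3 | u i ≠ 0}).ncard = 2 ∧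
           ∀ i j : Fin 3, u i ≠ 0 → u j ≠ 0 → u i = u j) ∨
         (u 0 = u 1 ∧ u 1 = u 2 ∧ u 0 ≠ 0)) :
    extBallD u = ∅ :=
  stmt_4_general F u h
end

section
/- Let q be a prime power and u ∈ 𝔽_q³ a vector with exactly two nonzero coordinates, and suppose these two nonzero coordinates are distinct. Then |Ẽ(u)| = (q-1)(q-3). -/
open Set Pointwise

variable {F : Type*} [Field F]

/-! If `u` vanishes exactly at the coordinate `k`, a vector `v ∈ D_q` already differs from every
`λu` at `k`, so `v ∈ B(λu)` forces `v = λu` off `k`. Hence the elements of `Ẽ(u)` are exactly the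
vectors `λu` with the `k`-th coordinate replaced by some `c`, where `λ ≠ 0` and
`c ∉ {0, λuᵢ, λuⱼ}`; these `(λ, c)` number `(q - 1)(q - 3)` and give distinct vectors. -/

theorem mem_ball_iff_of_ne {α : Type*} {w v : Fin 3 → α} {k : Fin 3} (hk : w k ≠ v k) :
    v ∈ ball w ↔ ∀ m, m ≠ k → w m = v m := by
  simp only [ball, hdist, Set.mem_ofPred_eq, Set.ncard_le_one_iff_subsingleton]
  refine ⟨fun hsub m hm => by_contra fun hne => hm (hsub hne hk), fun hagree a ha b hb => ?_⟩
  have honly : ∀ m, w m ≠ v m → m = k := fun m hm => by_contra fun h => hm (hagree m h)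
  exact (honly a ha).trans (honly b hb).symm

theorem mem_Dq_iff_of_ne {i j k : Fin 3} (hij : i ≠ j) (hik : i ≠ k) (hjk : j ≠ k)
    (v : Fin 3 → F) :
    v ∈ Dq ↔ v i ≠ 0 ∧ v j ≠ 0 ∧ v k ≠ 0 ∧ v i ≠ v j ∧ v i ≠ v k ∧ v j ≠ v k := by
  fin_cases i <;> fin_cases j <;> fin_cases k <;> simp_all [Dq, eq_comm] <;> tauto

theorem Fin.exists_ne_ne_of_ne {i j : Fin 3} (hij : i ≠ j) : ∃ k, i ≠ k ∧ j ≠ k := by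
  revert i j; decide

theorem card_compl_triple [Fintype F] [DecidableEq F] {a b : F} (ha : a ≠ 0) (hb : b ≠ 0)
    (hab : a ≠ b) {l : F} (hl : l ≠ 0) :
    (({0, l * a, l * b} : Finset F)ᶜ).card = Fintype.card F - 3 := by
  rw [Finset.card_compl, Finset.card_insert_of_notMem, Finset.card_pair]
  · exact fun h => hab (mul_left_cancel₀ hl h)
  · simp [ha, hb, hl, eq_comm (a := (0 : F))]

section ExtBallDParams

variable [Fintype F] [DecidableEq F] {u : Fin 3 → F} {i j k : Fin 3}

def extBallDParams (u : Fin 3 → F) (i j : Fin 3) : Finset (Σ _ : F, F) :=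
  (Finset.univ.erase 0).sigma fun l => ({0, l * u i, l * u j} : Finset F)ᶜ

theorem card_extBallDParams (hi : u i ≠ 0) (hj : u j ≠ 0) (huij : u i ≠ u j) :
    (extBallDParams u i j).card = (Fintype.card F - 1) * (Fintype.card F - 3) := by
  rw [extBallDParams, Finset.card_sigma,
    Finset.sum_congr rfl fun l hl => card_compl_triple hi hj huij (Finset.ne_of_mem_erase hl),
    Finset.sum_const, Finset.card_erase_of_mem (Finset.mem_univ _), Finset.card_univ,
    smul_eq_mul]

theorem extBallD_eq_image (hij : i ≠ j) (hik : i ≠ k) (hjk : j ≠ k) (hi : u i ≠ 0)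
    (hj : u j ≠ 0) (hk : u k = 0) (huij : u i ≠ u j) :
    extBallD u = (extBallDParams u i j).image fun p => Function.update (p.1 • u) k p.2 := by
  ext v
  simp only [extBallD, extBall, Finset.coe_image, Set.mem_image, Set.mem_inter_iff,
    Set.mem_iUnion, Finset.mem_coe, extBallDParams, Finset.mem_sigma, Finset.mem_erase,
    Finset.mem_compl, Finset.mem_insert, Finset.mem_singleton, Finset.mem_univ, and_true,
    not_or, mem_Dq_iff_of_ne hij hik hjk]
  constructor
  · rintro ⟨⟨l, hl⟩, hvi, hvj, hvk, -, hvik, hvjk⟩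
    rw [mem_ball_iff_of_ne (k := k) (by simpa [hk] using hvk.symm)] at hl
    have hli : l * u i = v i := by simpa using hl i hik
    have hlj : l * u j = v j := by simpa using hl j hjk
    refine ⟨⟨l, v k⟩, ⟨?_, hvk, ?_, ?_⟩, ?_⟩
    · rintro rfl
      exact hvi (by simpa using hli.symm)
    · rw [hli]; exact hvik.symm
    · rw [hlj]; exact hvjk.symm
    · funext m
      by_cases hm : m = k
      · subst hm; simp
      · simpa [hm] using hl m hm
  · rintro ⟨⟨l, c⟩, ⟨hl, hc, hci, hcj⟩, rfl⟩
    refine ⟨⟨l, (mem_ball_iff_of_ne (k := k) ?_).2 fun m hm => ?_⟩, ?_⟩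
    · simpa [hk] using Ne.symm hc
    · simp [hm]
    · simp [hik, hjk, hl, hi, hj, hc, Ne.symm hci, Ne.symm hcj, huij]

theorem injOn_extBallDParams (hi : u i ≠ 0) (hik : i ≠ k) :
    Set.InjOn (fun p : Σ _ : F, F => Function.update (p.1 • u) k p.2) (extBallDParams u i j) := by
  rintro ⟨l, c⟩ - ⟨l', c'⟩ - h
  have hl : l * u i = l' * u i := by simpa [hik] using congrFun h i
  have hc : c = c' := by simpa using congrFun h k
  rw [mul_right_cancel₀ hi hl, hc]

end ExtBallDParams

theorem ncard_extBallD_of_eq_zero [Fintype F] {u : Fin 3 → F} {i j k : Fin 3} (hij : i ≠ j)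
    (hik : i ≠ k) (hjk : j ≠ k) (hi : u i ≠ 0) (hj : u j ≠ 0) (hk : u k = 0) (huij : u i ≠ u j) :
    (extBallD u).ncard = (Fintype.card F - 1) * (Fintype.card F - 3) := by
  classical
  rw [extBallD_eq_image hij hik hjk hi hj hk huij, Set.ncard_coe_finset,
    Finset.card_image_of_injOn (injOn_extBallDParams hi hik), card_extBallDParams hi hj huij]

theorem stmt_5_general (q : ℕ) (F : Type*) [Field F] [Fintype F]
    (hcard : Fintype.card F = q) (u : Fin 3 → F)
    (h2 : ({i : Fin 3 | u i ≠ 0}).ncard = 2)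
    (hd : ∀ i j : Fin 3, i ≠ j → u i ≠ 0 → u j ≠ 0 → u i ≠ u j) :
    (extBallD u).ncard = (q - 1) * (q - 3) := by
  obtain ⟨i, j, hij, hsupp⟩ := Set.ncard_eq_two.1 h2
  obtain ⟨k, hik, hjk⟩ := Fin.exists_ne_ne_of_ne hij
  have hi : u i ≠ 0 := (hsupp.ge (Set.mem_insert i {j}) :)
  have hj : u j ≠ 0 := (hsupp.ge (Set.mem_insert_of_mem i rfl) :)
  have hk : u k = 0 := by
    by_contra hk
    rcases hsupp.le hk with rfl | rfl
    exacts [hik rfl, hjk rfl]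
  rw [← hcard]
  exact ncard_extBallD_of_eq_zero hij hik hjk hi hj hk (hd i j hij hi hj)

theorem stmt_5 (q : ℕ) (hq : IsPrimePow q) (F : Type*) [Field F] [Fintype F]
    (hcard : Fintype.card F = q) (u : Fin 3 → F)
    (h2 : ({i : Fin 3 | u i ≠ 0}).ncard = 2)
    (hd : ∀ i j : Fin 3, i ≠ j → u i ≠ 0 → u j ≠ 0 → u i ≠ u j) :
    (extBallD u).ncard = (q - 1) * (q - 3) :=
  stmt_5_general q F hcard u h2 hd
end

section
/- Let q be a prime power and u, v ∈ 𝔽_q³. Suppose that the sets B̃(λu), for λ ranging over 𝔽_q*, are pairwise disjoint, and likewise the sets B̃(λv), for λ ranging over 𝔽_q*, are pairwise disjoint. Then |Ẽ(u) ∩ Ẽ(v)| = (q-1)·∑_{μ ∈ 𝔽_q*} |B̃(u) ∩ B̃(μv)|. -/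
open Set Pointwise

variable {F : Type*} [Field F]

/-!
Scaling by a nonzero `c` preserves Hamming distance and `D_q`, so `B̃(c • x) = c • B̃(x)`, and
`B̃(0) = ∅` because vectors of `D_q` have full weight. Hence `Ẽ(u) ∩ Ẽ(v)` is the union of the sets
`B̃(λu) ∩ B̃(μv)` over `λ, μ ∈ 𝔽_q*`, which the hypotheses make pairwise disjoint; scaling by
`λ⁻¹` shows `|B̃(λu) ∩ B̃(μv)| = |B̃(u) ∩ B̃(λ⁻¹μv)|`, and for each of the `q - 1` values of `λ`
the sum over `μ` is the same.
-/

open scoped Function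

lemma hdist_smul_smul_s10 {c : F} (hc : c ≠ 0) (x w : Fin 3 → F) :
    hdist (c • x) (c • w) = hdist x w := by
  simp [hdist, mul_right_inj' hc]

lemma smul_mem_Dq_iff {c : F} (hc : c ≠ 0) (w : Fin 3 → F) : c • w ∈ Dq ↔ w ∈ Dq := by
  simp [Dq, mul_right_inj' hc, hc]

lemma hdist_zero_of_mem_Dq {w : Fin 3 → F} (hw : w ∈ Dq) : hdist 0 w = 3 := by
  obtain ⟨-, -, -, h0, h1, h2⟩ := hw
  have hall : {i : Fin 3 | (0 : Fin 3 → F) i ≠ w i} = univ := by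
    refine eq_univ_of_forall fun i => ?_
    fin_cases i <;> simp [Ne.symm h0, Ne.symm h1, Ne.symm h2]
  simp only [hdist]
  rw [hall, ncard_univ, Nat.card_fin]

lemma ballD_zero : ballD (0 : Fin 3 → F) = ∅ :=
  eq_empty_of_forall_notMem fun _ ⟨hb, hD⟩ => by
    simp [ball, hdist_zero_of_mem_Dq hD] at hb

lemma ballD_units_smul (c : Fˣ) (x : Fin 3 → F) : ballD ((c : F) • x) = c • ballD x := by
  ext w
  rw [mem_smul_set_iff_inv_smul_mem]
  conv_lhs => rw [← smul_inv_smul c w]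
  simp only [ballD, ball, mem_inter_iff, mem_ofPred_eq, Units.smul_def,
    hdist_smul_smul_s10 c.ne_zero, smul_mem_Dq_iff c.ne_zero]

lemma extBallD_eq_iUnion_units (u : Fin 3 → F) :
    extBallD u = ⋃ c : Fˣ, ballD ((c : F) • u) := by
  ext w
  simp only [extBallD, extBall, ballD, iUnion_inter, mem_iUnion]
  constructor
  · rintro ⟨l, hl⟩
    obtain rfl | hl0 := eq_or_ne l 0
    · rw [zero_smul, ← ballD, ballD_zero] at hl
      exact hl.elim
    · exact ⟨Units.mk0 l hl0, hl⟩
  · rintro ⟨c, hc⟩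
    exact ⟨c, hc⟩

lemma pairwise_disjoint_ballD_units_smul {u : Fin 3 → F}
    (hu : ∀ l l' : F, l ≠ 0 → l' ≠ 0 → l ≠ l' → ballD (l • u) ∩ ballD (l' • u) = ∅) :
    Pairwise (Disjoint on fun c : Fˣ => ballD ((c : F) • u)) := fun c c' hcc' =>
  disjoint_iff_inter_eq_empty.mpr <|
    hu c c' c.ne_zero c'.ne_zero fun h => hcc' (Units.ext h)

lemma Pairwise.disjoint_inter_prod {ι κ α : Type*} {f : ι → Set α} {g : κ → Set α}
    (hf : Pairwise (Disjoint on f)) (hg : Pairwise (Disjoint on g)) :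
    Pairwise (Disjoint on fun p : ι × κ => f p.1 ∩ g p.2) := by
  rintro ⟨i, j⟩ ⟨i', j'⟩ hne
  by_cases hi : i = i'
  · have hj : j ≠ j' := fun hj => hne (by rw [hi, hj])
    exact (hg hj).mono inter_subset_right inter_subset_right
  · exact (hf hi).mono inter_subset_left inter_subset_left

lemma ncard_ballD_units_smul_inter (c d : Fˣ) (u v : Fin 3 → F) :
    (ballD ((c : F) • u) ∩ ballD ((d : F) • v)).ncard =
      (ballD u ∩ ballD (((c⁻¹ * d : Fˣ) : F) • v)).ncard := by
  have hd : (d : F) • v = (c : F) • ((c⁻¹ * d : Fˣ) : F) • v := by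
    rw [smul_smul, ← Units.val_mul, mul_inv_cancel_left]
  rw [hd, ballD_units_smul, ballD_units_smul, ← smul_set_inter, ncard_smul_set]

theorem stmt_10_general (q : ℕ) (F : Type*) [Field F] [Fintype F] [DecidableEq F]
    (hcard : Fintype.card F = q) (u v : Fin 3 → F)
    (hu : ∀ l l' : F, l ≠ 0 → l' ≠ 0 → l ≠ l' → ballD (l • u) ∩ ballD (l' • u) = ∅)
    (hv : ∀ l l' : F, l ≠ 0 → l' ≠ 0 → l ≠ l' → ballD (l • v) ∩ ballD (l' • v) = ∅) :
    (extBallD u ∩ extBallD v).ncard =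
      (q - 1) * ∑ m : Fˣ, (ballD u ∩ ballD ((m : F) • v)).ncard := by
  have hunion : extBallD u ∩ extBallD v =
      ⋃ p : Fˣ × Fˣ, ballD ((p.1 : F) • u) ∩ ballD ((p.2 : F) • v) := by
    rw [extBallD_eq_iUnion_units, extBallD_eq_iUnion_units, iUnion_inter_iUnion, iUnion_prod']
  have hdisj := (pairwise_disjoint_ballD_units_smul hu).disjoint_inter_prod
    (pairwise_disjoint_ballD_units_smul hv)
  rw [hunion, ncard_iUnion_of_finite (fun _ => toFinite _) hdisj, finsum_eq_sum_of_fintype,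
    Fintype.sum_prod_type]
  calc ∑ c : Fˣ, ∑ d : Fˣ, (ballD ((c : F) • u) ∩ ballD ((d : F) • v)).ncard
      = ∑ _c : Fˣ, ∑ m : Fˣ, (ballD u ∩ ballD ((m : F) • v)).ncard := by
        refine Finset.sum_congr rfl fun c _ => ?_
        simp_rw [ncard_ballD_units_smul_inter c]
        exact Fintype.sum_equiv (Equiv.mulLeft c⁻¹) _ _ fun _ => rfl
    _ = (q - 1) * ∑ m : Fˣ, (ballD u ∩ ballD ((m : F) • v)).ncard := by
        rw [Finset.sum_const, Finset.card_univ, Fintype.card_units, hcard, smul_eq_mul]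

theorem stmt_10 (q : ℕ) (hq : IsPrimePow q) (F : Type*) [Field F] [Fintype F] [DecidableEq F]
    (hcard : Fintype.card F = q) (u v : Fin 3 → F)
    (hu : ∀ l l' : F, l ≠ 0 → l' ≠ 0 → l ≠ l' → ballD (l • u) ∩ ballD (l' • u) = ∅)
    (hv : ∀ l l' : F, l ≠ 0 → l' ≠ 0 → l ≠ l' → ballD (l • v) ∩ ballD (l' • v) = ∅) :
    (extBallD u ∩ extBallD v).ncard =
      (q - 1) * ∑ m : Fˣ, (ballD u ∩ ballD ((m : F) • v)).ncard :=
  stmt_10_general q F hcard u v hu hv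
end

section
/- Let q be a prime power, let N be a subgroup of the symmetric group S₃ acting on 𝔽_q³ by permuting coordinates, and let L ⊆ 𝔽_q³ be a set invariant under the action of N (i.e., for every φ ∈ N, the image of L under φ equals L). Let A_q = {(u₁,u₂,u₃) ∈ 𝔽_q³ : u₁, u₂, u₃ are pairwise distinct}. Suppose that for every v ∈ A_q there exist a permutation φ ∈ N, a nonzero scalar ν ∈ 𝔽_q*, an element h ∈ L, scalars λ, μ ∈ 𝔽_q, and an index j ∈ {1,2,3} such that ν·(v^φ) = λh + μe_j, where e_j is the j-th standard basis vector and v^φ denotes v with coordinates permuted by φ. Then L ∪ {(1,1,1)} is a short covering of 𝔽_q³. -/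
open Set Pointwise

variable {F : Type*} [Field F]

/-! Extended balls are invariant under permuting coordinates and under nonzero scaling, so the
hypothesis puts every `v` with distinct coordinates into `E(h ∘ φ⁻¹)`, and `h ∘ φ⁻¹ ∈ L` by the
invariance of `L`. A vector with a repeated coordinate agrees with a multiple of `(1,1,1)` in two
coordinates, so it lies in `E(1,1,1)`. -/

omit [Field F] in
lemma hdist_comp_perm (σ : Equiv.Perm (Fin 3)) (u v : Fin 3 → F) :
    hdist (u ∘ σ) (v ∘ σ) = hdist u v := by
  have hset : σ '' {i | u (σ i) ≠ v (σ i)} = {i | u i ≠ v i} := by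
    ext i
    simp only [Set.mem_image, Set.mem_ofPred_eq]
    exact ⟨fun ⟨k, hk, hki⟩ => hki ▸ hk, fun hi => ⟨σ.symm i, by simpa using hi, by simp⟩⟩
  rw [hdist, hdist, ← hset, Set.ncard_image_of_injective _ σ.injective]
  rfl

lemma hdist_smul {c : F} (hc : c ≠ 0) (u v : Fin 3 → F) : hdist (c • u) (c • v) = hdist u v := by
  simp only [hdist, Pi.smul_apply, smul_eq_mul, ne_eq, mul_right_inj' hc]

lemma mem_extBall_comp_perm_iff (σ : Equiv.Perm (Fin 3)) {u v : Fin 3 → F} :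
    v ∘ σ ∈ extBall (u ∘ σ) ↔ v ∈ extBall u := by
  simp only [extBall, ball, Set.mem_iUnion, Set.mem_ofPred_eq]
  exact exists_congr fun l => by rw [← hdist_comp_perm σ (l • u) v]; rfl

lemma smul_mem_extBall_iff {c : F} (hc : c ≠ 0) {u v : Fin 3 → F} :
    c • v ∈ extBall u ↔ v ∈ extBall u := by
  simp only [extBall, ball, Set.mem_iUnion, Set.mem_ofPred_eq]
  constructor
  · rintro ⟨l, hl⟩
    refine ⟨c⁻¹ * l, ?_⟩
    rwa [← hdist_smul hc, smul_smul, mul_inv_cancel_left₀ hc]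
  · rintro ⟨l, hl⟩
    refine ⟨c * l, ?_⟩
    rwa [mul_smul, hdist_smul hc]

lemma mem_extBall_of_eq_off (c : F) (j : Fin 3) {u v : Fin 3 → F}
    (h : ∀ i, i ≠ j → c * u i = v i) : v ∈ extBall u := by
  refine Set.mem_iUnion.2 ⟨c, ?_⟩
  calc hdist (c • u) v ≤ ({j} : Set (Fin 3)).ncard :=
        Set.ncard_le_ncard (fun i hi => by_contra fun hij => hi (h i hij)) (Set.finite_singleton j)
    _ = 1 := Set.ncard_singleton j

lemma smul_add_smul_single_mem_extBall (u : Fin 3 → F) (l m : F) (j : Fin 3) :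
    l • u + m • (Pi.single j 1 : Fin 3 → F) ∈ extBall u :=
  mem_extBall_of_eq_off l j fun i hi => by simp [hi]

lemma mem_extBall_one_of_not_injective {v : Fin 3 → F} (hv : ¬ Function.Injective v) :
    v ∈ extBall (fun _ => 1) := by
  obtain ⟨i, k, hvik, hik⟩ := Function.not_injective_iff.1 hv
  obtain ⟨j, hji, hjk⟩ : ∃ j : Fin 3, j ≠ i ∧ j ≠ k := by
    clear hvik; revert i k; decide
  refine mem_extBall_of_eq_off (v i) j fun i' hi' => ?_
  have hi'ik : i' = i ∨ i' = k := by
    clear hvik; revert i k j i'; decide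
  rcases hi'ik with rfl | rfl
  · exact mul_one _
  · exact (mul_one _).trans hvik

theorem stmt_16_general (F : Type*) [Field F]
    (N : Subgroup (Equiv.Perm (Fin 3))) (L : Set (Fin 3 → F))
    (hL : ∀ φ ∈ N, (fun u : Fin 3 → F => u ∘ ⇑φ) '' L = L)
    (hcov : ∀ v : Fin 3 → F, (v 0 ≠ v 1 ∧ v 0 ≠ v 2 ∧ v 1 ≠ v 2) →
        ∃ φ ∈ N, ∃ ν : F, ν ≠ 0 ∧ ∃ h ∈ L, ∃ l m : F, ∃ j : Fin 3,
          ν • (v ∘ ⇑φ) = l • h + m • (Pi.single j 1 : Fin 3 → F)) :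
    ShortCovering (L ∪ {fun _ : Fin 3 => (1 : F)}) := by
  refine Set.eq_univ_of_forall fun v => Set.mem_iUnion₂.2 ?_
  by_cases hv : Function.Injective v
  · obtain ⟨φ, hφ, ν, hν, h, hh, l, m, j, heq⟩ :=
      hcov v ⟨hv.ne (by decide), hv.ne (by decide), hv.ne (by decide)⟩
    refine ⟨h ∘ ⇑φ⁻¹, Or.inl ?_, ?_⟩
    · rw [← hL φ⁻¹ (inv_mem hφ)]
      exact ⟨h, hh, rfl⟩
    · have hvφ : ν • (v ∘ ⇑φ) ∈ extBall h := heq ▸ smul_add_smul_single_mem_extBall h l m j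
      rw [smul_mem_extBall_iff hν] at hvφ
      rw [← mem_extBall_comp_perm_iff φ]
      simpa [Function.comp_assoc] using hvφ
  · exact ⟨_, Or.inr rfl, mem_extBall_one_of_not_injective hv⟩

theorem stmt_16 (q : ℕ) (hq : IsPrimePow q) (F : Type*) [Field F] [Fintype F]
    (hcard : Fintype.card F = q)
    (N : Subgroup (Equiv.Perm (Fin 3))) (L : Set (Fin 3 → F))
    (hL : ∀ φ ∈ N, (fun u : Fin 3 → F => u ∘ ⇑φ) '' L = L)
    (hcov : ∀ v : Fin 3 → F, (v 0 ≠ v 1 ∧ v 0 ≠ v 2 ∧ v 1 ≠ v 2) →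
        ∃ φ ∈ N, ∃ ν : F, ν ≠ 0 ∧ ∃ h ∈ L, ∃ l m : F, ∃ j : Fin 3,
          ν • (v ∘ ⇑φ) = l • h + m • (Pi.single j 1 : Fin 3 → F)) :
    ShortCovering (L ∪ {fun _ : Fin 3 => (1 : F)}) :=
  stmt_16_general F N L hL hcov
end

section
/- Let ξ be a generator of the multiplicative group 𝔽_8* of the finite field with 8 elements. Then the six-element set {(1,1,1), (0,0,ξ), (1,ξ,0), (1,ξ²,ξ³), (1,ξ³,ξ²), (ξ⁶,ξ⁵,1)} is a short covering of 𝔽_8³; in particular there exists a short covering of 𝔽_8³ with 6 elements. -/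
open Set Pointwise

variable {F : Type*} [Field F]

/-!
A vector with two equal coordinates, or with a zero coordinate, lies in the extended ball of
`(1, 1, 1)`, `(0, 0, ξ)` or `(1, ξ, 0)`: two coordinates of a vector fix a scalar multiple of
the centre agreeing with it there, and the third coordinate may then differ. Every other vector
is `(ξ ^ a, ξ ^ b, ξ ^ c)` with `a, b, c` distinct in `ZMod 7`, and it lies in the extended ball
of `(ξ ^ p, ξ ^ q, ξ ^ r)` as soon as one of `b - a`, `c - a`, `c - b` equals the corresponding
difference of `p, q, r`; a finite check in `ZMod 7` shows that the remaining centres realise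
enough differences.
-/

theorem shortCovering_iff {H : Set (Fin 3 → F)} :
    ShortCovering H ↔ ∀ v, ∃ h ∈ H, v ∈ extBall h := by
  simp [ShortCovering, Set.eq_univ_iff_forall]

theorem Fin.eq_of_ne_of_ne {i j a b : Fin 3} (hij : i ≠ j) (hai : a ≠ i) (haj : a ≠ j)
    (hbi : b ≠ i) (hbj : b ≠ j) : a = b := by
  revert i j a b; decide

omit [Field F] in
theorem mem_ball_of_eq_of_eq {u v : Fin 3 → F} {i j : Fin 3} (hij : i ≠ j) (hi : u i = v i)
    (hj : u j = v j) : v ∈ ball u := by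
  refine (Set.ncard_le_one).2 fun a ha b hb => ?_
  simp only [Set.mem_ofPred_eq] at ha hb
  exact Fin.eq_of_ne_of_ne hij (by grind) (by grind) (by grind) (by grind)

theorem mem_extBall_of_mul_eq_of_mul_eq {u v : Fin 3 → F} {i j : Fin 3} (hij : i ≠ j) (l : F)
    (hi : l * u i = v i) (hj : l * u j = v j) : v ∈ extBall u :=
  Set.mem_iUnion.2 ⟨l, mem_ball_of_eq_of_eq hij hi hj⟩

theorem mem_extBall_of_notMem_Dq {c : F} (hc : c ≠ 0) {v : Fin 3 → F} (hv : v ∉ Dq) :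
    v ∈ extBall ![1, 1, 1] ∨ v ∈ extBall ![0, 0, c] ∨ v ∈ extBall ![1, c, 0] := by
  simp only [Dq, Set.mem_ofPred_eq, not_and_or, not_not] at hv
  rcases hv with h | h | h | h | h | h
  · exact .inl (mem_extBall_of_mul_eq_of_mul_eq (i := 0) (j := 1) (by decide) (v 0)
      (by simp) (by simp [h]))
  · exact .inl (mem_extBall_of_mul_eq_of_mul_eq (i := 0) (j := 2) (by decide) (v 0)
      (by simp) (by simp [h]))
  · exact .inl (mem_extBall_of_mul_eq_of_mul_eq (i := 1) (j := 2) (by decide) (v 1)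
      (by simp) (by simp [h]))
  · exact .inr (.inl (mem_extBall_of_mul_eq_of_mul_eq (i := 0) (j := 2) (by decide) (v 2 / c)
      (by simp [h]) (by simp [hc])))
  · exact .inr (.inl (mem_extBall_of_mul_eq_of_mul_eq (i := 1) (j := 2) (by decide) (v 2 / c)
      (by simp [h]) (by simp [hc])))
  · exact .inr (.inr (mem_extBall_of_mul_eq_of_mul_eq (i := 0) (j := 2) (by decide) (v 0)
      (by simp) (by simp [h])))

theorem pow_val_add {M : Type*} [Monoid M] {g : M} {n : ℕ} [NeZero n] (hg : g ^ n = 1)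
    (a b : ZMod n) : g ^ (a + b).val = g ^ a.val * g ^ b.val := by
  rw [ZMod.val_add, ← pow_eq_pow_mod _ hg, pow_add]

theorem exists_pow_val_eq_of_mem_zpowers {G : Type*} [Group G] {g : G} {n : ℕ} [NeZero n]
    (hg : g ^ n = 1) {x : G} (hx : x ∈ Subgroup.zpowers g) : ∃ a : ZMod n, g ^ a.val = x := by
  have hfin : IsOfFinOrder g := isOfFinOrder_iff_pow_eq_one.2 ⟨n, NeZero.pos n, hg⟩
  obtain ⟨k, rfl⟩ := hfin.mem_powers_iff_mem_zpowers.2 hx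
  exact ⟨k, by rw [ZMod.val_natCast, ← pow_eq_pow_mod _ hg]⟩

theorem mem_extBall_of_sub_eq_sub {n : ℕ} [NeZero n] {g : F} (hg : g ^ n = 1) {u v : Fin 3 → F}
    {i j : Fin 3} (hij : i ≠ j) {p q a b : ZMod n} (hui : g ^ p.val = u i) (huj : g ^ q.val = u j)
    (hvi : g ^ a.val = v i) (hvj : g ^ b.val = v j) (h : b - a = q - p) : v ∈ extBall u := by
  refine mem_extBall_of_mul_eq_of_mul_eq hij (g ^ (a - p).val) ?_ ?_
  · rw [← hui, ← hvi, ← pow_val_add hg, sub_add_cancel]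
  · rw [← huj, ← hvj, ← pow_val_add hg, show a - p + q = b by linear_combination -h]

theorem mem_extBall_pow_of_sub_eq_sub {n : ℕ} [NeZero n] {g : F} (hg : g ^ n = 1)
    {v : Fin 3 → F} {p q r a b c : ZMod n} (ha : g ^ a.val = v 0) (hb : g ^ b.val = v 1)
    (hc : g ^ c.val = v 2) (h : b - a = q - p ∨ c - a = r - p ∨ c - b = r - q) :
    v ∈ extBall ![g ^ p.val, g ^ q.val, g ^ r.val] := by
  rcases h with h | h | h
  · exact mem_extBall_of_sub_eq_sub hg (i := 0) (j := 1) (by decide) rfl rfl ha hb h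
  · exact mem_extBall_of_sub_eq_sub hg (i := 0) (j := 2) (by decide) rfl rfl ha hc h
  · exact mem_extBall_of_sub_eq_sub hg (i := 1) (j := 2) (by decide) rfl rfl hb hc h

set_option synthInstance.maxSize 256 in
/-- The four disjuncts list the coordinate differences of the exponent vectors of the centres
`(1, ξ, 0)`, `(1, ξ², ξ³)`, `(1, ξ³, ξ²)` and `(ξ⁶, ξ⁵, 1)`. -/
theorem ZMod.sub_cover_seven {a b c : ZMod 7} (hab : a ≠ b) (hac : a ≠ c) (hbc : b ≠ c) :
    b - a = 1 - 0 ∨ (b - a = 2 - 0 ∨ c - a = 3 - 0 ∨ c - b = 3 - 2) ∨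
      (b - a = 3 - 0 ∨ c - a = 2 - 0 ∨ c - b = 2 - 3) ∨
      (b - a = 5 - 6 ∨ c - a = 0 - 6 ∨ c - b = 0 - 5) := by
  revert a b c; decide

theorem mem_extBall_of_mem_Dq {g : F} (hg : g ^ 7 = 1)
    (hlog : ∀ x : F, x ≠ 0 → ∃ a : ZMod 7, g ^ a.val = x) {v : Fin 3 → F} (hv : v ∈ Dq) :
    v ∈ extBall ![1, g, 0] ∨ v ∈ extBall ![1, g ^ 2, g ^ 3] ∨ v ∈ extBall ![1, g ^ 3, g ^ 2] ∨
      v ∈ extBall ![g ^ 6, g ^ 5, 1] := by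
  obtain ⟨h01, h02, h12, h0, h1, h2⟩ := hv
  obtain ⟨a, ha⟩ := hlog _ h0
  obtain ⟨b, hb⟩ := hlog _ h1
  obtain ⟨c, hc⟩ := hlog _ h2
  rcases ZMod.sub_cover_seven (a := a) (b := b) (c := c) (by grind) (by grind) (by grind)
    with h | h | h | h
  · exact .inl (mem_extBall_of_sub_eq_sub hg (i := 0) (j := 1) (by decide) (by simp)
      (by simp [ZMod.val_one_eq_one_mod]) ha hb h)
  · exact .inr <| .inl <| by
      simpa [ZMod.val_ofNat] using mem_extBall_pow_of_sub_eq_sub hg ha hb hc h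
  · exact .inr <| .inr <| .inl <| by
      simpa [ZMod.val_ofNat] using mem_extBall_pow_of_sub_eq_sub hg ha hb hc h
  · exact .inr <| .inr <| .inr <| by
      simpa [ZMod.val_ofNat] using mem_extBall_pow_of_sub_eq_sub hg ha hb hc h

def sixCenters (g : F) : Set (Fin 3 → F) :=
  {![1, 1, 1], ![0, 0, g], ![1, g, 0], ![1, g ^ 2, g ^ 3], ![1, g ^ 3, g ^ 2], ![g ^ 6, g ^ 5, 1]}

theorem shortCovering_sixCenters {g : F} (hg : g ^ 7 = 1)
    (hlog : ∀ x : F, x ≠ 0 → ∃ a : ZMod 7, g ^ a.val = x) : ShortCovering (sixCenters g) := by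
  have hg0 : g ≠ 0 := by rintro rfl; simp at hg
  refine shortCovering_iff.2 fun v => ?_
  by_cases hv : v ∈ Dq
  · rcases mem_extBall_of_mem_Dq hg hlog hv with h | h | h | h <;>
      exact ⟨_, by simp [sixCenters], h⟩
  · rcases mem_extBall_of_notMem_Dq hg0 hv with h | h | h <;>
      exact ⟨_, by simp [sixCenters], h⟩

theorem ncard_sixCenters {g : F} (hg : orderOf g = 7) : (sixCenters g).ncard = 6 := by
  have hg0 : g ≠ 0 := by rintro rfl; simp at hg
  have hpow : ∀ k, k ≠ 0 → k < 7 → g ^ k ≠ 1 := fun k hk hk7 =>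
    pow_ne_one_of_lt_orderOf hk (hg ▸ hk7)
  have h1 : g ≠ 1 := by simpa using hpow 1 one_ne_zero (by norm_num)
  have h2 := hpow 2 (by norm_num) (by norm_num)
  have h3 := hpow 3 (by norm_num) (by norm_num)
  have h6 := hpow 6 (by norm_num) (by norm_num)
  have h23 : g ^ 2 ≠ g ^ 3 := by rw [pow_succ g 2]; simpa [hg0] using h1
  classical
  rw [sixCenters, Set.ncard_eq_toFinset_card']
  simp [Matrix.vecCons_inj, hg0, h1, h2, h3, h6, h23, Ne.symm, eq_comm (a := (1 : F))]

theorem stmt_19 (ξ : (GaloisField 2 3)ˣ)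
    (hξ : ∀ x : (GaloisField 2 3)ˣ, x ∈ Subgroup.zpowers ξ) :
    ShortCovering ({![1, 1, 1], ![0, 0, (ξ : GaloisField 2 3)],
        ![1, (ξ : GaloisField 2 3), 0],
        ![1, (ξ : GaloisField 2 3) ^ 2, (ξ : GaloisField 2 3) ^ 3],
        ![1, (ξ : GaloisField 2 3) ^ 3, (ξ : GaloisField 2 3) ^ 2],
        ![(ξ : GaloisField 2 3) ^ 6, (ξ : GaloisField 2 3) ^ 5, 1]} :
      Set (Fin 3 → GaloisField 2 3)) ∧
    ∃ H : Set (Fin 3 → GaloisField 2 3), ShortCovering H ∧ H.ncard = 6 := by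
  have hord : orderOf ξ = 7 := by
    rw [orderOf_eq_card_of_forall_mem_zpowers hξ, Nat.card_units,
      GaloisField.card 2 3 (by norm_num)]
    norm_num
  have hξ7 : ξ ^ 7 = 1 := hord ▸ pow_orderOf_eq_one ξ
  have hlog (x : GaloisField 2 3) (hx : x ≠ 0) :
      ∃ a : ZMod 7, (ξ : GaloisField 2 3) ^ a.val = x := by
    obtain ⟨a, ha⟩ := exists_pow_val_eq_of_mem_zpowers hξ7 (hξ (Units.mk0 x hx))
    exact ⟨a, by simpa using congrArg Units.val ha⟩
  have hcov := shortCovering_sixCenters (by simpa using congrArg Units.val hξ7) hlog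
  exact ⟨hcov, _, hcov, ncard_sixCenters (orderOf_units.trans hord)⟩
end
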